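/- Let p ∈ ℂ be a primitive third root of unity and let M1, M2 be the 6×6 matrices of Le Bruyn's representation of B₃ (as in the previous statement). For the braid word w = σ₁⁻¹σ₂σ₁⁻¹σ₂²σ₁⁻²σ₂ representing the knot 8₁₇ and its reversed word w' = σ₂σ₁⁻²σ₂²σ₁⁻¹σ₂σ₁⁻¹, the traces satisfy Tr(ρ(w)) ≠ Tr(ρ(w')), where ρ(σ₁) = M1 and ρ(σ₂) = M2. Consequently, w and w' are not conjugate in B₃. -/

import Mathlib

open Matrix

/-- The single braid relation of `B₃`. -/
def braidRel : Set (FreeGroup (Fin 2)) :=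
  {FreeGroup.of 0 * FreeGroup.of 1 * FreeGroup.of 0 *
    (FreeGroup.of 1 * FreeGroup.of 0 * FreeGroup.of 1)⁻¹}

/-- The braid group on three strands. -/
abbrev B3 : Type := PresentedGroup braidRel

/-- The generators of `B₃`. -/
def b3σ (i : Fin 2) : B3 := PresentedGroup.of i

/-- Le Bruyn's matrix for `σ₁`. -/
def M1 (p : ℂ) : Matrix (Fin 6) (Fin 6) ℂ :=
  !![p+1, p-1, p-1, p-1, -p+1, -p+1;
     -2*p-1, -1, -2*p-1, 2*p+1, -2*p-1, 2*p+1;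
     p+2, p+2, -p, -p-2, -p-2, p+2;
     -p-2, -3*p, p+2, -p+2, 3*p, -p-2;
     p-1, -p+1, 3*p+3, -p+1, 3*p+1, -3*p-3;
     -3, -2*p-1, 2*p+1, 3, 2*p+1, -2*p-3]

/-- Le Bruyn's matrix for `σ₂`. -/
def M2 (p : ℂ) : Matrix (Fin 6) (Fin 6) ℂ :=
  !![p+1, p-1, p-1, -p+1, p-1, p-1;
     -2*p-1, -1, -2*p-1, -2*p-1, 2*p+1, -2*p-1;
     p+2, p+2, -p, p+2, p+2, -p-2;
     p+2, 3*p, -p-2, -p+2, 3*p, -p-2;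
     -p+1, p-1, -3*p-3, -p+1, 3*p+1, -3*p-3;
     3, 2*p+1, -2*p-1, 3, 2*p+1, -2*p-3]

/-- The braid word for the knot `8₁₇`: `σ₁⁻¹σ₂σ₁⁻¹σ₂²σ₁⁻²σ₂`. -/
def w817 : B3 := (b3σ 0)⁻¹ * b3σ 1 * (b3σ 0)⁻¹ * (b3σ 1) ^ 2 * (b3σ 0)⁻¹ ^ 2 * b3σ 1

/-- The reversed braid word: `σ₂σ₁⁻²σ₂²σ₁⁻¹σ₂σ₁⁻¹`. -/
def w817rev : B3 := b3σ 1 * (b3σ 0)⁻¹ ^ 2 * (b3σ 1) ^ 2 * (b3σ 0)⁻¹ * b3σ 1 * (b3σ 0)⁻¹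


/-!
Le Bruyn's matrices satisfy the braid relation, so `σᵢ ↦ Mᵢ` is a representation of `B₃`, and
the trace of a representation is constant on conjugacy classes. The entries lie in `ℚ(p)`;
writing a matrix over `ℚ(p)` as `A + p B` with rational `A`, `B` turns the braid relation, the
inverse of `M1` and the two traces into finite computations checked by the kernel, and
`M2 = D M1 D` with `D = diag(1, 1, 1, -1, -1, -1)` gives the inverse of `M2` for free. The traces
are `-1092 - 7128 p` and `6036 + 7128 p`, which differ because `(2p + 1)² = -3`.
-/

/-- `⟨A, B⟩` stands for the matrix `A + ω • B` over `ℚ(ω)`, `ω² + ω + 1 = 0`. Products in this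
form are computable, so identities between them can be proved by `decide`. -/
@[ext]
structure OmegaMatrix (n : Type*) where
  base : Matrix n n ℚ
  omega : Matrix n n ℚ

namespace OmegaMatrix

variable {n : Type*} [Fintype n] [DecidableEq n]

instance : DecidableEq (OmegaMatrix n) := fun _ _ =>
  decidable_of_iff _ OmegaMatrix.ext_iff.symm

instance : One (OmegaMatrix n) := ⟨⟨1, 0⟩⟩

instance : Mul (OmegaMatrix n) :=
  ⟨fun x y => ⟨x.base * y.base - x.omega * y.omega,
    x.base * y.omega + x.omega * y.base - x.omega * y.omega⟩⟩

omit [Fintype n] in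
@[simp] lemma base_one : (1 : OmegaMatrix n).base = 1 := rfl

omit [Fintype n] in
@[simp] lemma omega_one : (1 : OmegaMatrix n).omega = 0 := rfl

omit [DecidableEq n] in
@[simp] lemma base_mul (x y : OmegaMatrix n) :
    (x * y).base = x.base * y.base - x.omega * y.omega := rfl

omit [DecidableEq n] in
@[simp] lemma omega_mul (x y : OmegaMatrix n) :
    (x * y).omega = x.base * y.omega + x.omega * y.base - x.omega * y.omega := rfl

instance : Monoid (OmegaMatrix n) where
  mul_assoc x y z := by ext1 <;> simp only [base_mul, omega_mul] <;> noncomm_ring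
  one_mul x := by ext1 <;> simp
  mul_one x := by ext1 <;> simp

variable {K : Type*} [Field K] [CharZero K] {ω : K}

def toMatrix (hω : ω ^ 2 + ω + 1 = 0) : OmegaMatrix n →* Matrix n n K where
  toFun x := (Rat.castHom K).mapMatrix x.base + ω • (Rat.castHom K).mapMatrix x.omega
  map_one' := by simp
  map_mul' x y := by
    simp only [base_mul, omega_mul, map_sub, map_add, map_mul, add_mul, mul_add, smul_mul_assoc,
      mul_smul_comm, smul_smul, smul_add, smul_sub]
    linear_combination (norm := module)
      (-hω) • ((Rat.castHom K).mapMatrix x.omega * (Rat.castHom K).mapMatrix y.omega)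

lemma toMatrix_apply (hω : ω ^ 2 + ω + 1 = 0) (x : OmegaMatrix n) (i j : n) :
    toMatrix hω x i j = x.base i j + ω * x.omega i j := rfl

lemma trace_toMatrix (hω : ω ^ 2 + ω + 1 = 0) (x : OmegaMatrix n) :
    (toMatrix hω x).trace = x.base.trace + ω * x.omega.trace := by
  simp [toMatrix, Matrix.trace, Finset.mul_sum, Finset.sum_add_distrib]

end OmegaMatrix

namespace B3

variable {G : Type*} [Group G]

def lift (a b : G) (h : a * b * a = b * a * b) : B3 →* G :=
  PresentedGroup.toGroup (f := ![a, b]) <| by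
    simp only [braidRel, Set.mem_singleton_iff, forall_eq, map_mul, map_inv,
      FreeGroup.lift_apply_of, mul_inv_eq_one]
    exact h

variable {a b : G} {h : a * b * a = b * a * b}

@[simp] lemma lift_b3σ_zero : lift a b h (b3σ 0) = a := PresentedGroup.toGroup.of _

@[simp] lemma lift_b3σ_one : lift a b h (b3σ 1) = b := PresentedGroup.toGroup.of _

end B3

lemma Matrix.trace_eq_of_isConj {n R : Type*} [Fintype n] [DecidableEq n] [CommRing R]
    {u v : (Matrix n n R)ˣ} (h : IsConj u v) :
    trace (u : Matrix n n R) = trace (v : Matrix n n R) := by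
  obtain ⟨c, rfl⟩ := isConj_iff.mp h
  rw [Units.val_mul, Units.val_mul, trace_units_conj]

namespace LeBruyn

open OmegaMatrix

def m1 : OmegaMatrix (Fin 6) :=
  ⟨!![1, -1, -1, -1, 1, 1;
      -1, -1, -1, 1, -1, 1;
      2, 2, 0, -2, -2, 2;
      -2, 0, 2, 2, 0, -2;
      -1, 1, 3, 1, 1, -3;
      -3, -1, 1, 3, 1, -3],
   !![1, 1, 1, 1, -1, -1;
      -2, 0, -2, 2, -2, 2;
      1, 1, -1, -1, -1, 1;
      -1, -3, 1, -1, 3, -1;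
      1, -1, 3, -1, 3, -3;
      0, -2, 2, 0, 2, -2]⟩

def n1 : OmegaMatrix (Fin 6) :=
  ⟨(1 / 4 : ℚ) • !![0, -2, -2, 2, -2, -2;
      1, -1, 1, 1, -1, 1;
      1, 1, 1, 1, 1, -1;
      1, -3, -1, 3, -3, -1;
      2, -2, 0, 2, -2, 0;
      3, -1, 1, 3, -1, -1],
   (1 / 4 : ℚ) • !![-1, -1, -1, 1, -1, -1;
      2, 0, 2, 2, -2, 2;
      -1, -1, 1, -1, -1, 1;
      -1, -3, 1, 1, -3, 1;
      1, -1, 3, 1, -3, 3;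
      0, -2, 2, 0, -2, 2]⟩

def d : OmegaMatrix (Fin 6) := ⟨diagonal ![1, 1, 1, -1, -1, -1], 0⟩

def m2 : OmegaMatrix (Fin 6) := d * m1 * d

def σ₁ : (OmegaMatrix (Fin 6))ˣ := ⟨m1, n1, by decide +kernel, by decide +kernel⟩

def dUnit : (OmegaMatrix (Fin 6))ˣ := ⟨d, d, by decide +kernel, by decide +kernel⟩

def σ₂ : (OmegaMatrix (Fin 6))ˣ := dUnit * σ₁ * dUnit

lemma σ₁_mul_σ₂_mul_σ₁ : σ₁ * σ₂ * σ₁ = σ₂ * σ₁ * σ₂ := Units.ext (by decide +kernel)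

@[simp] lemma val_σ₁ : (σ₁ : OmegaMatrix (Fin 6)) = m1 := rfl

@[simp] lemma val_σ₁_inv : (↑σ₁⁻¹ : OmegaMatrix (Fin 6)) = n1 := rfl

@[simp] lemma val_σ₂ : (σ₂ : OmegaMatrix (Fin 6)) = m2 := rfl

def omegaRep : B3 →* (OmegaMatrix (Fin 6))ˣ := B3.lift σ₁ σ₂ σ₁_mul_σ₂_mul_σ₁

lemma val_omegaRep_w817 :
    (omegaRep w817 : OmegaMatrix (Fin 6)) = n1 * m2 * n1 * m2 ^ 2 * n1 ^ 2 * m2 := by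
  simp [omegaRep, w817]

lemma val_omegaRep_w817rev :
    (omegaRep w817rev : OmegaMatrix (Fin 6)) = m2 * n1 ^ 2 * m2 ^ 2 * n1 * m2 * n1 := by
  simp [omegaRep, w817rev]

lemma M2_eq_diagonal_mul_M1_mul_diagonal (p : ℂ) :
    M2 p = diagonal ![1, 1, 1, -1, -1, -1] * M1 p * diagonal ![1, 1, 1, -1, -1, -1] := by
  ext i j
  fin_cases i <;> fin_cases j <;> simp [M1, M2] <;> ring

variable {p : ℂ} (hp : p ^ 2 + p + 1 = 0)

noncomputable def rep : B3 →* (Matrix (Fin 6) (Fin 6) ℂ)ˣ :=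
  (Units.map (toMatrix hp)).comp omegaRep

include hp

lemma toMatrix_m1 : toMatrix hp m1 = M1 p := by
  ext i j
  fin_cases i <;> fin_cases j <;> simp [toMatrix_apply, m1, M1] <;> ring

lemma toMatrix_d : toMatrix hp d = diagonal ![1, 1, 1, -1, -1, -1] := by
  ext i j
  fin_cases i <;> fin_cases j <;> simp [toMatrix_apply, d]

lemma toMatrix_m2 : toMatrix hp m2 = M2 p := by
  rw [m2, map_mul, map_mul, toMatrix_d, toMatrix_m1, M2_eq_diagonal_mul_M1_mul_diagonal]

lemma val_rep_b3σ_zero : (rep hp (b3σ 0) : Matrix (Fin 6) (Fin 6) ℂ) = M1 p := by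
  simp [rep, omegaRep, toMatrix_m1 hp]

lemma val_rep_b3σ_one : (rep hp (b3σ 1) : Matrix (Fin 6) (Fin 6) ℂ) = M2 p := by
  simp [rep, omegaRep, toMatrix_m2 hp]

lemma trace_rep_w817 :
    trace (rep hp w817 : Matrix (Fin 6) (Fin 6) ℂ) = -1092 - 7128 * p := by
  have hbase : (n1 * m2 * n1 * m2 ^ 2 * n1 ^ 2 * m2).base.trace = -1092 := by decide +kernel
  have homega : (n1 * m2 * n1 * m2 ^ 2 * n1 ^ 2 * m2).omega.trace = -7128 := by decide +kernel
  simp only [rep, MonoidHom.comp_apply, Units.coe_map, trace_toMatrix, val_omegaRep_w817, hbase,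
    homega]
  push_cast
  ring

lemma trace_rep_w817rev :
    trace (rep hp w817rev : Matrix (Fin 6) (Fin 6) ℂ) = 6036 + 7128 * p := by
  have hbase : (m2 * n1 ^ 2 * m2 ^ 2 * n1 * m2 * n1).base.trace = 6036 := by decide +kernel
  have homega : (m2 * n1 ^ 2 * m2 ^ 2 * n1 * m2 * n1).omega.trace = 7128 := by decide +kernel
  simp only [rep, MonoidHom.comp_apply, Units.coe_map, trace_toMatrix, val_omegaRep_w817rev,
    hbase, homega]
  push_cast
  ring

end LeBruyn

theorem stmt_10 (p : ℂ) (hp : p ^ 2 + p + 1 = 0) :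
    ((M1 p)⁻¹ * M2 p * (M1 p)⁻¹ * (M2 p) ^ 2 * ((M1 p)⁻¹) ^ 2 * M2 p).trace ≠
      (M2 p * ((M1 p)⁻¹) ^ 2 * (M2 p) ^ 2 * (M1 p)⁻¹ * M2 p * (M1 p)⁻¹).trace ∧
    ¬ IsConj w817 w817rev := by
  have hw : (LeBruyn.rep hp w817 : Matrix (Fin 6) (Fin 6) ℂ) =
      (M1 p)⁻¹ * M2 p * (M1 p)⁻¹ * (M2 p) ^ 2 * ((M1 p)⁻¹) ^ 2 * M2 p := by
    simp [w817, coe_units_inv, LeBruyn.val_rep_b3σ_zero hp, LeBruyn.val_rep_b3σ_one hp]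
  have hw' : (LeBruyn.rep hp w817rev : Matrix (Fin 6) (Fin 6) ℂ) =
      M2 p * ((M1 p)⁻¹) ^ 2 * (M2 p) ^ 2 * (M1 p)⁻¹ * M2 p * (M1 p)⁻¹ := by
    simp [w817rev, coe_units_inv, LeBruyn.val_rep_b3σ_zero hp, LeBruyn.val_rep_b3σ_one hp]
  have hne : trace (LeBruyn.rep hp w817 : Matrix (Fin 6) (Fin 6) ℂ) ≠
      trace (LeBruyn.rep hp w817rev : Matrix (Fin 6) (Fin 6) ℂ) := by
    rw [LeBruyn.trace_rep_w817, LeBruyn.trace_rep_w817rev]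
    intro h
    have h2p : 2 * p + 1 = 0 := by linear_combination h / (-7128)
    have hsq : (2 * p + 1) ^ 2 = -3 := by linear_combination 4 * hp
    norm_num [h2p] at hsq
  refine ⟨?_, fun hc => hne (trace_eq_of_isConj ((LeBruyn.rep hp).map_isConj hc))⟩
  rw [← hw, ← hw']
  exact hne
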